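/- In Der_C(R) for R = C[t,t^{-1},u | u^2 = t^2+4t], with basis elements d_n = t^n u D and d^1_n = t^n D where D = (t+2)\partial_u + u\partial_t, the following commutation relations hold for all integers m, n: [d_m, d_n] = (n-m)(d_{m+n+1} + 4 d_{m+n}); [d^1_m, d^1_n] = (n-m) d_{m+n-1}; and [d_m, d^1_n] = (n-m-1) d^1_{m+n+1} + (4n-4m-2) d^1_{m+n}. -/

import Mathlib

open Polynomial LaurentPolynomial

/-- The three-point ring `R = ℂ[t,t⁻¹,u | u² = t² + 4t]`. -/
noncomputable abbrev ThreePointRing : Type :=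
  AdjoinRoot (Polynomial.X ^ 2 -
    Polynomial.C (LaurentPolynomial.T 1 ^ 2 + 4 * LaurentPolynomial.T 1) :
      Polynomial (LaurentPolynomial ℂ))

/-- `tⁿ` in the three-point ring. -/
noncomputable def tpow (n : ℤ) : ThreePointRing := AdjoinRoot.of _ (LaurentPolynomial.T n)

/-- `u` in the three-point ring. -/
noncomputable def uR : ThreePointRing := AdjoinRoot.root _

/-!
For derivations of the form `f • D`, `g • D` the commutator is `(f * D g - g * D f) • D`, so each
relation reduces to an identity in `R` once `D tⁿ = n tⁿ⁻¹ u` and `D (tⁿ u) = n tⁿ⁻¹ u² + tⁿ (t + 2)`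
are known. The first follows from `D t = u` since `n ↦ tⁿ` is a homomorphism from `ℤ` to the units
of `R`; the identities in `R` then only use `u² = t² + 4t` and `t⁻¹ t = 1`.
-/

namespace Derivation

theorem leibniz_of_map_add_eq_mul {R A M : Type*} [CommSemiring R] [CommRing A] [Algebra R A]
    [AddCommGroup M] [Module A M] [Module R M] (D : Derivation R A M) {e : ℤ → A}
    (he : ∀ m n, e (m + n) = e m * e n) (he₀ : e 0 = 1) (n : ℤ) :
    D (e n) = n • e (n - 1) • D (e 1) := by
  -- The defect `f n` is multiplied by the unit `e 1` when `n` increases by one, and `f 0 = 0`.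
  set f : ℤ → M := fun n ↦ D (e n) - n • e (n - 1) • D (e 1) with hf
  have hshift (n : ℤ) : f (n + 1) = e 1 • f n := by
    have h₁ : e 1 * e (n - 1) = e n := by rw [← he, add_sub_cancel]
    simp only [hf, he n 1, leibniz, smul_sub, smul_comm (e 1) (n : ℤ), smul_smul, h₁, add_smul,
      one_smul, add_sub_cancel_right]
    abel
  have hunit : e (-1) * e 1 = 1 := by rw [← he, neg_add_cancel, he₀]
  suffices f n = 0 from sub_eq_zero.mp this
  induction n using Int.induction_on with
  | zero => simp [hf, he₀]
  | succ k ih => rw [hshift, ih, smul_zero]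
  | pred k ih =>
    rw [← one_smul A (f _), ← hunit, mul_smul, ← hshift, sub_add_cancel, ih, smul_zero]

theorem commutator_smul_smul {R A : Type*} [CommRing R] [CommRing A] [Algebra R A]
    (D : Derivation R A A) (f g : A) : ⁅f • D, g • D⁆ = (f * D g - g * D f) • D := by
  ext x
  simp only [commutator_apply, smul_apply, leibniz, smul_eq_mul]
  ring

end Derivation

namespace ThreePointRing

theorem tpow_add (m n : ℤ) : tpow (m + n) = tpow m * tpow n := by
  rw [tpow, T_add, map_mul, ← tpow, ← tpow]

theorem tpow_zero : tpow 0 = 1 := by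
  rw [tpow, T_zero, map_one]

theorem tpow_sub (m n : ℤ) : tpow (m - n) = tpow m * tpow (-n) := by
  rw [sub_eq_add_neg, tpow_add]

theorem tpow_neg_one_mul_tpow_one : tpow (-1) * tpow 1 = 1 := by
  rw [← tpow_add, neg_add_cancel, tpow_zero]

theorem uR_sq : uR ^ 2 = tpow 1 ^ 2 + 4 * tpow 1 := by
  have h :=
    AdjoinRoot.eval₂_root (X ^ 2 - Polynomial.C (T 1 ^ 2 + 4 * T 1) : (LaurentPolynomial ℂ)[X])
  rw [eval₂_sub, eval₂_X_pow, Polynomial.eval₂_C, sub_eq_zero] at h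
  rw [uR, tpow, h, map_add, map_pow, map_mul, map_ofNat]

variable {D : Derivation ℂ ThreePointRing ThreePointRing}

theorem derivation_tpow (hDt : D (tpow 1) = uR) (n : ℤ) : D (tpow n) = n * tpow (n - 1) * uR := by
  rw [D.leibniz_of_map_add_eq_mul tpow_add tpow_zero, hDt, zsmul_eq_mul, smul_eq_mul, mul_assoc]

theorem derivation_tpow_mul_uR (hDt : D (tpow 1) = uR) (hDu : D uR = tpow 1 + 2) (n : ℤ) :
    D (tpow n * uR) = n * tpow (n - 1) * uR ^ 2 + tpow n * (tpow 1 + 2) := by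
  rw [D.leibniz, derivation_tpow hDt, hDu, smul_eq_mul, smul_eq_mul]
  ring

theorem lie_tuD_tuD (hDt : D (tpow 1) = uR) (hDu : D uR = tpow 1 + 2) (m n : ℤ) :
    ⁅(tpow m * uR) • D, (tpow n * uR) • D⁆ =
      ((n : ℂ) - m) • ((tpow (m + n + 1) * uR) • D + (4 : ℂ) • ((tpow (m + n) * uR) • D)) := by
  rw [D.commutator_smul_smul, derivation_tpow_mul_uR hDt hDu, derivation_tpow_mul_uR hDt hDu]
  simp only [← smul_assoc, ← add_smul, Algebra.smul_def, map_sub, map_intCast, map_ofNat]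
  refine congrArg (· • D) ?_
  simp only [tpow_add, tpow_sub]
  -- `t⁻¹ u² = t + 4`
  linear_combination (n - m : ThreePointRing) * tpow m * tpow n * uR *
    (tpow (-1) * uR_sq + (tpow 1 + 4) * tpow_neg_one_mul_tpow_one)

theorem lie_tD_tD (hDt : D (tpow 1) = uR) (m n : ℤ) :
    ⁅tpow m • D, tpow n • D⁆ = ((n : ℂ) - m) • ((tpow (m + n - 1) * uR) • D) := by
  rw [D.commutator_smul_smul, derivation_tpow hDt, derivation_tpow hDt]
  simp only [← smul_assoc, Algebra.smul_def, map_sub, map_intCast]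
  refine congrArg (· • D) ?_
  simp only [tpow_add, tpow_sub]
  ring

theorem lie_tuD_tD (hDt : D (tpow 1) = uR) (hDu : D uR = tpow 1 + 2) (m n : ℤ) :
    ⁅(tpow m * uR) • D, tpow n • D⁆ =
      ((n : ℂ) - m - 1) • (tpow (m + n + 1) • D) +
        (4 * (n : ℂ) - 4 * m - 2) • (tpow (m + n) • D) := by
  rw [D.commutator_smul_smul, derivation_tpow_mul_uR hDt hDu, derivation_tpow hDt]
  simp only [← smul_assoc, ← add_smul, Algebra.smul_def, map_sub, map_mul, map_intCast, map_one,
    map_ofNat]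
  refine congrArg (· • D) ?_
  simp only [tpow_add, tpow_sub]
  -- `t⁻¹ u² = t + 4`
  linear_combination (n - m : ThreePointRing) * tpow m * tpow n *
    (tpow (-1) * uR_sq + (tpow 1 + 4) * tpow_neg_one_mul_tpow_one)

end ThreePointRing

/-- for the derivation `D = (t+2)∂ᵤ + u∂ₜ` of `R` and the basis
`dₙ = tⁿuD`, `d¹ₙ = tⁿD` of `Der_ℂ(R)`, the commutation relations
`[dₘ,dₙ] = (n-m)(d_{m+n+1} + 4d_{m+n})`, `[d¹ₘ,d¹ₙ] = (n-m)d_{m+n-1}`,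
`[dₘ,d¹ₙ] = (n-m-1)d¹_{m+n+1} + (4n-4m-2)d¹_{m+n}` hold. -/
theorem three_point_witt_relations
    (D : Derivation ℂ ThreePointRing ThreePointRing)
    (hDt : D (tpow 1) = uR) (hDu : D uR = tpow 1 + 2) :
    ∀ m n : ℤ,
      (⁅(tpow m * uR) • D, (tpow n * uR) • D⁆ =
        ((n : ℂ) - m) • ((tpow (m + n + 1) * uR) • D + (4 : ℂ) • ((tpow (m + n) * uR) • D))) ∧
      (⁅tpow m • D, tpow n • D⁆ = ((n : ℂ) - m) • ((tpow (m + n - 1) * uR) • D)) ∧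
      (⁅(tpow m * uR) • D, tpow n • D⁆ =
        ((n : ℂ) - m - 1) • (tpow (m + n + 1) • D) +
          (4 * (n : ℂ) - 4 * m - 2) • (tpow (m + n) • D)) := fun m n ↦
  ⟨ThreePointRing.lie_tuD_tuD hDt hDu m n, ThreePointRing.lie_tD_tD hDt m n,
    ThreePointRing.lie_tuD_tD hDt hDu m n⟩
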